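/- arXiv:1304.2664 — 5 statements merged into one kernel-verified Lean document; each statement's English description precedes it below -/
import Mathlib

section
/- Let A be a bounded invertible operator on a Hilbert space with bounded inverse, let B = I - AᵀA/‖A‖², and r = 1 - (‖A⁻¹‖‖A‖)⁻². Then the Neumann-type series A⁻¹ = ‖A‖⁻² · Σ_{n=0}^∞ Bⁿ Aᵀ converges in operator norm. -/
open scoped RealInnerProductSpace

/-- For an invertible bounded operator `A` on a Hilbert space, with
`B = I - AᵀA/‖A‖²`, the Neumann-type series `‖A‖⁻² Σ_{n} Bⁿ Aᵀ` converges in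
operator norm to `A⁻¹`. -/
theorem stmt_2 {H : Type*} [NormedAddCommGroup H] [InnerProductSpace ℝ H] [CompleteSpace H]
    (A : H ≃L[ℝ] H) (B : H →L[ℝ] H)
    (hB : B = ContinuousLinearMap.id ℝ H -
      (‖(A : H →L[ℝ] H)‖ ^ 2)⁻¹ •
        ((ContinuousLinearMap.adjoint (A : H →L[ℝ] H)).comp (A : H →L[ℝ] H))) :
    HasSum
      (fun n : ℕ =>
        (‖(A : H →L[ℝ] H)‖ ^ 2)⁻¹ •
          ((B ^ n).comp (ContinuousLinearMap.adjoint (A : H →L[ℝ] H))))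
      (A.symm : H →L[ℝ] H) := by
  rcases subsingleton_or_nontrivial H with hs | hn
  · have : Subsingleton (H →L[ℝ] H) := ⟨fun f g => by ext x; exact Subsingleton.elim _ _⟩
    have h1 : (fun n : ℕ =>
        (‖(A : H →L[ℝ] H)‖ ^ 2)⁻¹ •
          ((B ^ n).comp (ContinuousLinearMap.adjoint (A : H →L[ℝ] H)))) =
        fun _ : ℕ => (0 : H →L[ℝ] H) := funext fun n => Subsingleton.elim _ _
    rw [h1, Subsingleton.elim ((A.symm : H →L[ℝ] H)) 0]
    exact hasSum_zero
  set A' : H →L[ℝ] H := (A : H →L[ℝ] H) with hA'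
  set AT : H →L[ℝ] H := ContinuousLinearMap.adjoint A' with hAT
  set c : ℝ := (‖A'‖ ^ 2)⁻¹ with hc
  -- positivity facts
  have hAne : A' ≠ 0 := by
    intro h
    obtain ⟨x, hx⟩ := exists_ne (0 : H)
    have : A x = 0 := by rw [← ContinuousLinearEquiv.coe_coe, ← hA', h]; rfl
    exact hx (by simpa using A.injective (by simpa using this))
  have hApos : 0 < ‖A'‖ := norm_pos_iff.mpr hAne
  have hSne : (A.symm : H →L[ℝ] H) ≠ 0 := by
    intro h
    obtain ⟨x, hx⟩ := exists_ne (0 : H)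
    have : A.symm x = 0 := by rw [← ContinuousLinearEquiv.coe_coe, h]; rfl
    exact hx (by simpa using A.symm.injective (by simpa using this))
  have hSpos : 0 < ‖(A.symm : H →L[ℝ] H)‖ := norm_pos_iff.mpr hSne
  have hcpos : 0 < c := by positivity
  have hcA : c * ‖A'‖ ^ 2 = 1 := inv_mul_cancel₀ (by positivity)
  -- key pointwise bound: ‖B x‖² ≤ r ‖x‖²
  set r : ℝ := 1 - c * (‖(A.symm : H →L[ℝ] H)‖ ^ 2)⁻¹ with hr
  have hrlt : r < 1 := by
    have : 0 < c * (‖(A.symm : H →L[ℝ] H)‖ ^ 2)⁻¹ := by positivity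
    rw [hr]; linarith
  have hbound : ∀ x : H, ‖B x‖ ^ 2 ≤ r * ‖x‖ ^ 2 := by
    intro x
    have hBx : B x = x - c • AT (A' x) := by
      rw [hB]; rfl
    have hinner : ⟪x, c • AT (A' x)⟫ = c * ‖A' x‖ ^ 2 := by
      rw [real_inner_smul_right, ContinuousLinearMap.adjoint_inner_right]
      rw [real_inner_self_eq_norm_sq]
    have hATn : ‖AT (A' x)‖ ≤ ‖A'‖ * ‖A' x‖ := by
      calc ‖AT (A' x)‖ ≤ ‖AT‖ * ‖A' x‖ := AT.le_opNorm _
        _ = ‖A'‖ * ‖A' x‖ := by rw [hAT, ContinuousLinearMap.adjoint.norm_map]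
    have h1 : ‖c • AT (A' x)‖ ^ 2 ≤ c * ‖A' x‖ ^ 2 := by
      have : ‖c • AT (A' x)‖ = c * ‖AT (A' x)‖ := by
        rw [norm_smul, Real.norm_eq_abs, abs_of_pos hcpos]
      rw [this]
      calc (c * ‖AT (A' x)‖) ^ 2 ≤ (c * (‖A'‖ * ‖A' x‖)) ^ 2 := by
            apply pow_le_pow_left₀ (by positivity)
            exact mul_le_mul_of_nonneg_left hATn hcpos.le
        _ = (c * ‖A'‖ ^ 2) * (c * ‖A' x‖ ^ 2) := by ring
        _ = c * ‖A' x‖ ^ 2 := by rw [hcA, one_mul]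
    have h2 : ‖x‖ ^ 2 ≤ ‖(A.symm : H →L[ℝ] H)‖ ^ 2 * ‖A' x‖ ^ 2 := by
      have hx : ‖x‖ ≤ ‖(A.symm : H →L[ℝ] H)‖ * ‖A' x‖ := by
        have : x = (A.symm : H →L[ℝ] H) (A' x) := by simp [hA']
        calc ‖x‖ = ‖(A.symm : H →L[ℝ] H) (A' x)‖ := by rw [← this]
          _ ≤ ‖(A.symm : H →L[ℝ] H)‖ * ‖A' x‖ :=
              (A.symm : H →L[ℝ] H).le_opNorm _
      calc ‖x‖ ^ 2 ≤ (‖(A.symm : H →L[ℝ] H)‖ * ‖A' x‖) ^ 2 :=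
            pow_le_pow_left₀ (norm_nonneg _) hx 2
        _ = _ := by ring
    have h3 : c * (‖(A.symm : H →L[ℝ] H)‖ ^ 2)⁻¹ * ‖x‖ ^ 2 ≤ c * ‖A' x‖ ^ 2 := by
      rw [mul_assoc]
      apply mul_le_mul_of_nonneg_left _ hcpos.le
      rw [inv_mul_le_iff₀ (by positivity)]
      linarith [h2]
    calc ‖B x‖ ^ 2 = ‖x‖ ^ 2 - 2 * ⟪x, c • AT (A' x)⟫ + ‖c • AT (A' x)‖ ^ 2 := by
          rw [hBx, norm_sub_sq_real]
      _ ≤ ‖x‖ ^ 2 - 2 * (c * ‖A' x‖ ^ 2) + c * ‖A' x‖ ^ 2 := by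
          rw [hinner]; linarith [h1]
      _ = ‖x‖ ^ 2 - c * ‖A' x‖ ^ 2 := by ring
      _ ≤ r * ‖x‖ ^ 2 := by rw [hr]; nlinarith [h3]
  have hrnn : 0 ≤ r := by
    obtain ⟨x, hx⟩ := exists_ne (0 : H)
    have := hbound x
    nlinarith [sq_nonneg ‖B x‖, sq_abs ‖x‖, norm_pos_iff.mpr hx, sq_nonneg ‖x‖,
      pow_pos (norm_pos_iff.mpr hx) 2]
  -- ‖B‖ < 1
  have hBnorm : ‖B‖ < 1 := by
    have hle : ‖B‖ ≤ Real.sqrt r := by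
      apply ContinuousLinearMap.opNorm_le_bound _ (Real.sqrt_nonneg r)
      intro x
      have : ‖B x‖ = Real.sqrt (‖B x‖ ^ 2) := by
        rw [Real.sqrt_sq (norm_nonneg _)]
      rw [this]
      calc Real.sqrt (‖B x‖ ^ 2) ≤ Real.sqrt (r * ‖x‖ ^ 2) :=
            Real.sqrt_le_sqrt (hbound x)
        _ = Real.sqrt r * ‖x‖ := by
            rw [Real.sqrt_mul hrnn, Real.sqrt_sq (norm_nonneg _)]
    have : Real.sqrt r < 1 := by
      have := Real.sqrt_lt_sqrt hrnn hrlt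
      simpa using this
    linarith
  -- geometric series
  have hgeom : HasSum (fun n : ℕ => B ^ n) (Ring.inverse (1 - B)) :=
    hasSum_geom_series_inverse B hBnorm
  have hsum : HasSum (fun n : ℕ => B ^ n * (c • AT)) (Ring.inverse (1 - B) * (c • AT)) :=
    hgeom.mul_right _
  have hmul : (Ring.inverse (1 - B) * (c • AT)) = (A.symm : H →L[ℝ] H) := by
    have hunit : (Ring.inverse (1 - B)) * (1 - B) = 1 :=
      Ring.inverse_mul_cancel _ (isUnit_one_sub_of_norm_lt_one hBnorm)
    have h1B : (1 : H →L[ℝ] H) - B = c • (AT.comp A') := by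
      rw [hB, ContinuousLinearMap.one_def, sub_sub_cancel]
    have hcomp : (Ring.inverse (1 - B) * (c • AT)) * A' = 1 := by
      have : (c • AT) * A' = c • (AT.comp A') := rfl
      rw [mul_assoc, this, ← h1B, hunit]
    ext x
    have := congrArg (fun f : H →L[ℝ] H => f (A.symm x)) hcomp
    simp only [ContinuousLinearMap.mul_apply, ContinuousLinearMap.one_apply] at this
    have hAx : A' (A.symm x) = x := A.apply_symm_apply x
    rw [hAx] at this
    exact this
  rw [← hmul]
  convert hsum using 2 with n
  rw [mul_smul_comm]
  rfl
end

section
/- Let 𝒜 be a Banach algebra continuously embedded in the bounded operators ℬ(ℓ²), containing the identity, closed under adjoints, and satisfying ‖A²‖_𝒜 ≤ D ‖A‖_𝒜^{1+θ} ‖A‖_{ℬ(ℓ²)}^{1-θ} for all A ∈ 𝒜, where D > 0 and θ ∈ [0,1). Then 𝒜 is inverse-closed in ℬ(ℓ²): if A ∈ 𝒜 is invertible in ℬ(ℓ²), then A⁻¹ ∈ 𝒜. -/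
open Real Filter Topology
open scoped RealInnerProductSpace

lemma seq_key {D θ ρ : ℝ} (hD : 0 < D) (hθ0 : 0 ≤ θ) (hθ1 : θ < 1)
    (hρ0 : 0 < ρ) (hρ1 : ρ < 1) (x : ℕ → ℝ)
    (hrec : ∀ n, x (n+1) ≤ D * x n ^ (1+θ) * ((ρ ^ (2^n : ℕ) : ℝ)) ^ (1-θ)) :
    ∃ n, x n < 1 := by
  by_contra hcon
  push_neg at hcon
  set y : ℕ → ℝ := fun n => Real.log (x n) with hy
  have hxpos : ∀ n, 0 < x n := fun n => lt_of_lt_of_le one_pos (hcon n)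
  have hy0 : ∀ n, 0 ≤ y n := fun n => Real.log_nonneg (hcon n)
  set L : ℝ := |Real.log D| with hL
  set l : ℝ := Real.log ρ with hl
  have hLnn : 0 ≤ L := abs_nonneg _
  have hlneg : l < 0 := Real.log_neg hρ0 hρ1
  have hyrec : ∀ n, y (n+1) ≤ Real.log D + (1+θ) * y n + (1-θ) * ((2:ℝ)^n * l) := by
    intro n
    have h1 : y (n+1) ≤ Real.log (D * x n ^ (1+θ) * ((ρ ^ (2^n : ℕ) : ℝ)) ^ (1-θ)) :=
      Real.log_le_log (hxpos _) (hrec n)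
    have hx1 : (0:ℝ) < x n ^ (1+θ) := Real.rpow_pos_of_pos (hxpos n) _
    have hρp : (0:ℝ) < ρ ^ (2^n : ℕ) := pow_pos hρ0 _
    have hrp : (0:ℝ) < ((ρ ^ (2^n : ℕ) : ℝ)) ^ (1-θ) := Real.rpow_pos_of_pos hρp _
    rw [Real.log_mul (by positivity) hrp.ne', Real.log_mul hD.ne' hx1.ne',
      Real.log_rpow (hxpos n), Real.log_rpow hρp, Real.log_pow] at h1
    calc y (n+1) ≤ _ := h1
      _ ≤ _ := by push_cast; ring_nf; linarith
  have main : ∀ n, y n ≤ (1+θ)^n * y 0 + ((n:ℝ) * (1+θ)^n) * L + ((2:ℝ)^n - (1+θ)^n) * l := by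
    intro n
    induction n with
    | zero => simp
    | succ n ih =>
      have hp : (0:ℝ) ≤ 1+θ := by linarith
      have h2 := mul_le_mul_of_nonneg_left ih hp
      have h3 := hyrec n
      have hlD : Real.log D ≤ L := le_abs_self _
      have hpowA : (1:ℝ) ≤ (1+θ)^n := one_le_pow₀ (by linarith)
      have hprod : 0 ≤ ((1+θ) * (1+θ)^n - 1) * L :=
        mul_nonneg (by nlinarith) hLnn
      have e1 : ((1:ℝ)+θ)^(n+1) = (1+θ) * (1+θ)^n := by ring
      have e2 : ((2:ℝ))^(n+1) = 2 * 2^n := by ring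
      rw [e1, e2]
      push_cast
      nlinarith [h2, h3, hlD, hprod, mul_nonneg hLnn (le_of_lt (by positivity : (0:ℝ) < (1+θ)^n))]
  -- pass to g n = main bound / 2^n and get contradiction
  set r : ℝ := (1+θ)/2 with hr
  have hr0 : 0 ≤ r := by positivity
  have hr1 : r < 1 := by rw [hr]; linarith
  set g : ℕ → ℝ := fun n => r^n * y 0 + ((n:ℝ) * r^n) * L + (1 - r^n) * l with hg
  have hglim : Tendsto g atTop (𝓝 (0 * y 0 + 0 * L + (1 - 0) * l)) := by
    apply Tendsto.add
    apply Tendsto.add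
    · exact (tendsto_pow_atTop_nhds_zero_of_lt_one hr0 hr1).mul_const _
    · have := tendsto_pow_const_mul_const_pow_of_lt_one 1 hr0 hr1
      simp only [pow_one] at this
      exact this.mul_const _
    · exact ((tendsto_const_nhds.sub (tendsto_pow_atTop_nhds_zero_of_lt_one hr0 hr1)).mul_const _)
  have hlim' : Tendsto g atTop (𝓝 l) := by simpa using hglim
  have hev : ∀ᶠ n in atTop, g n < 0 := hlim'.eventually_lt_const hlneg
  obtain ⟨n, hn⟩ := hev.exists
  -- but 0 ≤ g n
  have h2n : (0:ℝ) < 2^n := by positivity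
  have hkey : (2:ℝ)^n * g n = (1+θ)^n * y 0 + ((n:ℝ) * (1+θ)^n) * L + ((2:ℝ)^n - (1+θ)^n) * l := by
    have h2r : (2:ℝ)^n * r^n = (1+θ)^n := by
      rw [← mul_pow]; congr 1; rw [hr]; ring
    rw [hg]; ring_nf; rw [← h2r]; ring
  have : 0 ≤ (2:ℝ)^n * g n := by
    rw [hkey]; exact le_trans (hy0 n) (main n)
  nlinarith

lemma sym_norm_le {H : Type*} [NormedAddCommGroup H] [InnerProductSpace ℝ H]
    (S : H →L[ℝ] H) (hsym : ∀ x y : H, ⟪S x, y⟫ = ⟪x, S y⟫)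
    {ρ : ℝ} (hρ : 0 ≤ ρ) (hb : ∀ x : H, |⟪S x, x⟫| ≤ ρ * ‖x‖^2) : ‖S‖ ≤ ρ := by
  refine S.opNorm_le_bound hρ (fun x => ?_)
  by_cases hSx : S x = 0
  · rw [hSx, norm_zero]; positivity
  have hx : x ≠ 0 := by rintro rfl; simp at hSx
  have hxn : 0 < ‖x‖ := norm_pos_iff.mpr hx
  have hSxn : 0 < ‖S x‖ := norm_pos_iff.mpr hSx
  set y : H := (‖x‖ / ‖S x‖) • S x with hy
  have hny : ‖y‖ = ‖x‖ := by
    rw [hy, norm_smul, norm_div, norm_norm, norm_norm, div_mul_cancel₀ _ hSxn.ne']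
  have hinner : ⟪S x, y⟫ = ‖x‖ * ‖S x‖ := by
    rw [hy, real_inner_smul_right, real_inner_self_eq_norm_mul_norm]
    field_simp
  have hyx : ⟪S y, x⟫ = ⟪S x, y⟫ := by
    rw [hsym y x, real_inner_comm]
  have hpol : 4 * ⟪S x, y⟫ = ⟪S (x+y), x+y⟫ - ⟪S (x-y), x-y⟫ := by
    rw [map_add, map_sub, inner_add_left, inner_add_right, inner_add_right,
      inner_sub_left, inner_sub_right, inner_sub_right]
    linarith [hyx]
  have h1 := hb (x + y)
  have h2 := hb (x - y)
  have hpar : ‖x + y‖^2 + ‖x - y‖^2 = 2 * (‖x‖^2 + ‖y‖^2) := by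
    rw [@norm_add_sq_real, @norm_sub_sq_real]; ring
  have habs1 : ⟪S (x+y), x+y⟫ ≤ ρ * ‖x+y‖^2 := le_trans (le_abs_self _) h1
  have habs2 : -(ρ * ‖x-y‖^2) ≤ ⟪S (x-y), x-y⟫ := neg_le_of_abs_le h2
  have hfin : 4 * (‖x‖ * ‖S x‖) ≤ 4 * (ρ * ‖x‖^2) := by
    rw [← hinner]
    have hpar2 : ρ * ‖x+y‖^2 + ρ * ‖x-y‖^2 = 4*(ρ*‖x‖^2) := by
      rw [hny] at hpar
      linear_combination ρ * hpar
    linarith [habs1, habs2, hpol, hpar2]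
  nlinarith [hfin, hxn]

/-- A Banach algebra `𝒜` continuously embedded in `ℬ(ℓ²)` (embedding `ι`),
containing the identity, closed under adjoints, and satisfying the differential norm
inequality `‖A²‖_𝒜 ≤ D ‖A‖_𝒜^{1+θ} ‖A‖_{ℬ}^{1-θ}` with `θ ∈ [0,1)`, is inverse-closed:
if `ι a` is invertible in `ℬ(ℓ²)` then its inverse also lies in `𝒜`. -/
theorem stmt_3 {H : Type*} [NormedAddCommGroup H] [InnerProductSpace ℝ H] [CompleteSpace H]
    {𝒜 : Type*} [NormedRing 𝒜] [NormedAlgebra ℝ 𝒜] [CompleteSpace 𝒜]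
    (ι : 𝒜 →ₐ[ℝ] (H →L[ℝ] H)) (hinj : Function.Injective ι)
    (C : ℝ) (hC : 0 < C) (hembed : ∀ a : 𝒜, ‖ι a‖ ≤ C * ‖a‖)
    (hstar : ∀ a : 𝒜, ∃ b : 𝒜, ι b = ContinuousLinearMap.adjoint (ι a) ∧ ‖b‖ = ‖a‖)
    (D θ : ℝ) (hD : 0 < D) (hθ0 : 0 ≤ θ) (hθ1 : θ < 1)
    (hdiff : ∀ a : 𝒜, ‖a * a‖ ≤ D * ‖a‖ ^ (1 + θ) * ‖ι a‖ ^ (1 - θ)) :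
    ∀ (a : 𝒜) (T : H ≃L[ℝ] H), ι a = (T : H →L[ℝ] H) →
      ∃ b : 𝒜, ι b = (T.symm : H →L[ℝ] H) := by
  intro a T hT
  by_cases hH : ∀ x : H, x = 0
  · exact ⟨1, by ext x; rw [hH x]; simp⟩
  push_neg at hH
  obtain ⟨x₀, hx₀⟩ := hH
  obtain ⟨b, hb, -⟩ := hstar a
  set T' : H →L[ℝ] H := (T : H →L[ℝ] H) with hT'
  set c : 𝒜 := b * a with hc
  have hιc : ι c = ContinuousLinearMap.adjoint T' * T' := by
    rw [hc, map_mul, hb, hT]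
  have hq : ∀ x : H, ⟪(ι c) x, x⟫ = ‖T' x‖^2 := by
    intro x
    rw [hιc, ContinuousLinearMap.mul_apply, ContinuousLinearMap.adjoint_inner_left,
      real_inner_self_eq_norm_sq]
  have hsymc : ∀ x y : H, ⟪(ι c) x, y⟫ = ⟪x, (ι c) y⟫ := by
    intro x y
    rw [hιc, ContinuousLinearMap.mul_apply, ContinuousLinearMap.mul_apply,
      ContinuousLinearMap.adjoint_inner_left, ContinuousLinearMap.adjoint_inner_right]
  -- coercivity constant
  set k : ℝ := ‖(T.symm : H →L[ℝ] H)‖ with hk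
  have hkpos : 0 < k := by
    rw [hk, norm_pos_iff]
    intro h0
    apply hx₀
    have := congrArg (fun f : H →L[ℝ] H => f (T x₀)) h0
    simpa using this
  have hcoerc : ∀ x : H, ‖x‖^2 ≤ k^2 * ‖T' x‖^2 := by
    intro x
    have h1 : ‖x‖ ≤ k * ‖T' x‖ := by
      calc ‖x‖ = ‖(T.symm : H →L[ℝ] H) (T' x)‖ := by simp [hT']
        _ ≤ k * ‖T' x‖ := ContinuousLinearMap.le_opNorm _ _
    nlinarith [norm_nonneg x, norm_nonneg (T' x), hkpos]
  set N : ℝ := ‖ι c‖ with hN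
  have hx₀n : 0 < ‖x₀‖ := norm_pos_iff.mpr hx₀
  set m : ℝ := (k^2)⁻¹ with hm
  have hmpos : 0 < m := by positivity
  have hqlow : ∀ x : H, m * ‖x‖^2 ≤ ⟪(ι c) x, x⟫ := by
    intro x
    rw [hq]
    have h1 := hcoerc x
    have h2 : m * k^2 = 1 := inv_mul_cancel₀ (by positivity)
    nlinarith [mul_le_mul_of_nonneg_left h1 hmpos.le]
  have hqhigh : ∀ x : H, ⟪(ι c) x, x⟫ ≤ N * ‖x‖^2 := by
    intro x
    calc ⟪(ι c) x, x⟫ ≤ ‖(ι c) x‖ * ‖x‖ := real_inner_le_norm _ _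
      _ ≤ (N * ‖x‖) * ‖x‖ :=
        mul_le_mul_of_nonneg_right (ContinuousLinearMap.le_opNorm _ _) (norm_nonneg _)
      _ = N * ‖x‖^2 := by ring
  have hmN : m ≤ N := by nlinarith [hqlow x₀, hqhigh x₀, hx₀n, mul_pos hx₀n hx₀n]
  have hNpos : 0 < N := lt_of_lt_of_le hmpos hmN
  set ρ : ℝ := max (1 - m / N) (1/2) with hρ
  have hρ0 : 0 < ρ := lt_of_lt_of_le one_half_pos (le_max_right _ _)
  have hρ1 : ρ < 1 := by
    apply max_lt _ (by norm_num)
    have : 0 < m / N := div_pos hmpos hNpos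
    linarith
  set e : 𝒜 := 1 - N⁻¹ • c with he
  have hιe : ι e = 1 - N⁻¹ • (ι c) := by rw [he, map_sub, map_one, map_smul]
  have hsym_e : ∀ x y : H, ⟪(ι e) x, y⟫ = ⟪x, (ι e) y⟫ := by
    intro x y
    rw [hιe]
    simp only [ContinuousLinearMap.sub_apply, ContinuousLinearMap.smul_apply,
      ContinuousLinearMap.one_apply, inner_sub_left, inner_sub_right,
      real_inner_smul_left, real_inner_smul_right, hsymc x y]
  have hqe : ∀ x : H, ⟪(ι e) x, x⟫ = ‖x‖^2 - N⁻¹ * ‖T' x‖^2 := by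
    intro x
    rw [hιe]
    rw [ContinuousLinearMap.sub_apply, ContinuousLinearMap.smul_apply,
      ContinuousLinearMap.one_apply, inner_sub_left, real_inner_smul_left,
      real_inner_self_eq_norm_sq, hq]
  have hdivN : m / N = m * N⁻¹ := div_eq_mul_inv m N
  have hEnorm : ‖ι e‖ ≤ ρ := by
    apply sym_norm_le _ hsym_e hρ0.le
    intro x
    rw [abs_le, hqe]
    constructor
    · have h1 : ‖T' x‖^2 ≤ N * ‖x‖^2 := by
        have := hqhigh x; rw [hq] at this; exact this
      have h2 : N⁻¹ * ‖T' x‖^2 ≤ N⁻¹ * (N * ‖x‖^2) :=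
        mul_le_mul_of_nonneg_left h1 (by positivity)
      have h3 : N⁻¹ * N = 1 := inv_mul_cancel₀ hNpos.ne'
      nlinarith [mul_nonneg hρ0.le (sq_nonneg ‖x‖)]
    · have h2 : m * ‖x‖^2 ≤ ‖T' x‖^2 := by
        have := hqlow x; rw [hq] at this; exact this
      have h3 : N⁻¹ * (m * ‖x‖^2) ≤ N⁻¹ * ‖T' x‖^2 :=
        mul_le_mul_of_nonneg_left h2 (by positivity)
      have h4 : (1 - m/N) * ‖x‖^2 ≤ ρ * ‖x‖^2 :=
        mul_le_mul_of_nonneg_right (le_max_left _ _) (sq_nonneg _)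
      nlinarith [h3, h4]
  -- apply the sequence lemma
  have hrec : ∀ n : ℕ, ‖e ^ 2 ^ (n+1)‖ ≤ D * ‖e ^ 2 ^ n‖ ^ (1+θ) * ((ρ ^ (2^n : ℕ) : ℝ)) ^ (1-θ) := by
    intro n
    have h1 : e ^ 2 ^ (n+1) = e ^ 2 ^ n * e ^ 2 ^ n := by
      rw [← pow_add]; congr 1; omega
    have h3 : ‖ι (e ^ 2 ^ n)‖ ≤ ρ ^ (2^n : ℕ) := by
      rw [map_pow]
      calc ‖(ι e) ^ 2 ^ n‖ ≤ ‖ι e‖ ^ 2 ^ n := norm_pow_le' _ (pow_pos two_pos n)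
        _ ≤ ρ ^ 2 ^ n := pow_le_pow_left₀ (norm_nonneg _) hEnorm _
    rw [h1]
    calc ‖e ^ 2^n * e ^ 2^n‖ ≤ D * ‖e ^ 2^n‖ ^ (1+θ) * ‖ι (e ^ 2^n)‖ ^ (1-θ) := hdiff _
      _ ≤ D * ‖e ^ 2^n‖ ^ (1+θ) * ((ρ ^ (2^n : ℕ) : ℝ)) ^ (1-θ) := by
          apply mul_le_mul_of_nonneg_left
            (Real.rpow_le_rpow (norm_nonneg _) h3 (by linarith))
          positivity
  obtain ⟨n, hn⟩ := seq_key hD hθ0 hθ1 hρ0 hρ1 (fun n => ‖e ^ 2 ^ n‖) hrec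
  have hu1 : ‖e ^ (2^n : ℕ)‖ < 1 := hn
  set Nn : ℕ := 2 ^ n with hNn
  set u : 𝒜ˣ := Units.oneSub (e ^ Nn) hu1 with hu'
  have huval : (↑u : 𝒜) = 1 - e ^ Nn := rfl
  set s : 𝒜 := ∑ i ∈ Finset.range Nn, e ^ i with hs
  have hgeom : (1 - e) * s = ↑u := by
    calc (1-e)*s = -((e-1)*s) := by rw [← neg_mul, neg_sub]
      _ = -(e^Nn - 1) := by rw [mul_geom_sum]
      _ = 1 - e^Nn := neg_sub _ _
      _ = ↑u := huval.symm
  have hgeom' : s * (1 - e) = ↑u := by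
    calc s*(1-e) = -(s*(e-1)) := by rw [← mul_neg, neg_sub]
      _ = -(e^Nn - 1) := by rw [geom_sum_mul]
      _ = 1 - e^Nn := neg_sub _ _
      _ = ↑u := huval.symm
  set d : 𝒜 := ↑u⁻¹ * s with hd
  have hdl : d * (1 - e) = 1 := by
    rw [hd, mul_assoc, hgeom', Units.inv_mul]
  have hcommu : Commute (1 - e : 𝒜) (↑u : 𝒜) := by
    show (1-e) * ↑u = ↑u * (1-e)
    conv_lhs => rw [← hgeom']
    conv_rhs => rw [← hgeom]
    rw [mul_assoc]
  have hcomm : Commute (1 - e : 𝒜) (↑u⁻¹ : 𝒜) := hcommu.units_inv_right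
  have hdr : (1 - e) * d = 1 := by
    rw [hd, ← mul_assoc, hcomm.eq, mul_assoc, hgeom, Units.inv_mul]
  have h1me : (1 : 𝒜) - e = N⁻¹ • c := by rw [he, sub_sub_cancel]
  set cinv : 𝒜 := N⁻¹ • d with hcinv
  have hcc : cinv * c = 1 := by
    calc cinv * c = d * (N⁻¹ • c) := by
          rw [hcinv, smul_mul_assoc, mul_smul_comm]
      _ = d * (1 - e) := by rw [← h1me]
      _ = 1 := hdl
  have hcl : (cinv * b) * a = 1 := by
    rw [mul_assoc, ← hc, hcc]
  refine ⟨cinv * b, ?_⟩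
  have hcomp : (ι (cinv * b)) * T' = 1 := by
    calc ι (cinv*b) * T' = ι (cinv*b) * ι a := by rw [hT, hT']
      _ = ι ((cinv*b)*a) := (map_mul ι _ _).symm
      _ = ι 1 := by rw [hcl]
      _ = 1 := map_one ι
  ext yv
  have h5 := congrArg (fun f : H →L[ℝ] H => f (T.symm yv)) hcomp
  simp only [ContinuousLinearMap.mul_apply, ContinuousLinearMap.one_apply] at h5
  have hTT : T' (T.symm yv) = yv := T.apply_symm_apply yv
  rw [hTT] at h5
  exact h5
end

section
/- For β > d and a relatively-separated subset Λ of ℝ^d, the Jaffard class 𝒥_β(Λ) of matrices A = (a(λ,λ'))_{λ,λ'∈Λ} with ‖A‖_{𝒥_β} := sup_{λ,λ'} (1+|λ-λ'|)^β |a(λ,λ')| < ∞ is closed under matrix multiplication, and there is a constant C (depending only on β, d, and the separation constant of Λ) such that ‖AB‖_{𝒥_β} ≤ C ‖A‖_{𝒥_β} ‖B‖_{𝒥_β} for all A, B ∈ 𝒥_β(Λ). -/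
/-- A subset `Λ ⊆ ℝ^d` is relatively separated with constant `D`: every translated
unit cube `λ + [0,1)^d` covering a point `t` accounts for at most `D` elements of `Λ`. -/
def RelSep {d : ℕ} (Λ : Set (EuclideanSpace ℝ (Fin d))) (D : ℕ) : Prop :=
  ∀ t : EuclideanSpace ℝ (Fin d),
    ({lam : Λ | ∀ i, (lam : EuclideanSpace ℝ (Fin d)) i ≤ t i ∧
        t i < (lam : EuclideanSpace ℝ (Fin d)) i + 1}).Finite ∧
    ({lam : Λ | ∀ i, (lam : EuclideanSpace ℝ (Fin d)) i ≤ t i ∧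
        t i < (lam : EuclideanSpace ℝ (Fin d)) i + 1}).ncard ≤ D

/-!
Write `w x y = (1 + dist x y) ^ (-β)`. Since `1 + dist x z ≤ 2 * max (1 + dist x y) (1 + dist y z)`,
`(1 + dist x z) ^ β * w x y * w y z ≤ 2 ^ β * (w x y + w y z)`, so the `(x, z)` entry of `AB` is
bounded by `2 ^ β * ‖A‖ * ‖B‖ * (1 + dist x z) ^ (-β)` times twice `sup_μ ∑_{λ ∈ Λ} w μ λ`.
That supremum is finite: rounding every point up to a point of `ℤ^d` moves it by at most `√d`,
the fibres of this rounding map on `Λ` are exactly the cubes counted by relative separation,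
and `∑_{n ∈ ℤ^d} (1 + ‖n‖) ^ (-β)` is dominated by a product of `d` one-dimensional
`p`-series with `p = β / d > 1`.
-/

open Real

lemma le_mul_rpow_neg_of_rpow_mul_le {r β u N : ℝ} (hr : 0 < r) (h : r ^ β * u ≤ N) :
    u ≤ N * r ^ (-β) := by
  rw [rpow_neg hr.le, ← div_eq_mul_inv, le_div_iff₀ (rpow_pos_of_pos hr β), mul_comm]
  exact h

lemma rpow_mul_rpow_neg_le {a b c β : ℝ} (hβ : 0 ≤ β) (ha : 0 < a) (hb : 0 ≤ b)
    (h : b ≤ c * a) : b ^ β * a ^ (-β) ≤ c ^ β := by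
  rw [rpow_neg ha.le, ← div_eq_mul_inv, ← div_rpow hb ha.le]
  exact rpow_le_rpow (div_nonneg hb ha.le) ((div_le_iff₀ ha).2 h) hβ

lemma rpow_mul_rpow_neg_mul_rpow_neg_le {r s t β : ℝ} (hβ : 0 ≤ β) (hr : 0 ≤ r) (hs : 0 < s)
    (ht : 0 < t) (hrst : r ≤ s + t) :
    r ^ β * (s ^ (-β) * t ^ (-β)) ≤ 2 ^ β * (s ^ (-β) + t ^ (-β)) := by
  wlog hst : s ≤ t generalizing s t
  · simpa only [mul_comm, add_comm] using this ht hs (by linarith) (by linarith)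
  have hrt : r ^ β * t ^ (-β) ≤ 2 ^ β := rpow_mul_rpow_neg_le hβ ht hr (by linarith)
  have hs' : 0 ≤ s ^ (-β) := rpow_nonneg hs.le _
  have ht' : 0 ≤ t ^ (-β) := rpow_nonneg ht.le _
  calc r ^ β * (s ^ (-β) * t ^ (-β)) = (r ^ β * t ^ (-β)) * s ^ (-β) := by ring
    _ ≤ 2 ^ β * s ^ (-β) := mul_le_mul_of_nonneg_right hrt hs'
    _ ≤ 2 ^ β * (s ^ (-β) + t ^ (-β)) := by gcongr; linarith

section Metric

variable {X : Type*} [PseudoMetricSpace X] {β : ℝ}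

lemma one_add_dist_rpow_neg_le (hβ : 0 ≤ β) (x y x' y' : X) :
    (1 + dist x y) ^ (-β) ≤ (1 + (dist x x' + dist y y')) ^ β * (1 + dist x' y') ^ (-β) := by
  refine le_mul_rpow_neg_of_rpow_mul_le (by positivity) (rpow_mul_rpow_neg_le hβ
    (by positivity) (by positivity) ?_)
  have := dist_triangle4 x' x y y'
  rw [dist_comm x' x] at this
  nlinarith [dist_nonneg (x := x) (y := y), dist_nonneg (x := x) (y := x'),
    dist_nonneg (x := y) (y := y')]

lemma one_add_dist_rpow_mul_rpow_neg_mul_rpow_neg_le (hβ : 0 ≤ β) (x y z : X) :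
    (1 + dist x z) ^ β * ((1 + dist x y) ^ (-β) * (1 + dist y z) ^ (-β)) ≤
      2 ^ β * ((1 + dist x y) ^ (-β) + (1 + dist y z) ^ (-β)) :=
  rpow_mul_rpow_neg_mul_rpow_neg_le hβ (by positivity) (by positivity) (by positivity)
    (by linarith [dist_triangle x y z])

theorem summable_mul_and_one_add_dist_rpow_mul_abs_tsum_le (hβ : 0 ≤ β) {S : ℝ}
    (hS : ∀ x : X, Summable (fun y => (1 + dist x y) ^ (-β)) ∧
      ∑' y, (1 + dist x y) ^ (-β) ≤ S)
    {a b : X → X → ℝ} {Na Nb : ℝ} (ha : ∀ x y, (1 + dist x y) ^ β * |a x y| ≤ Na)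
    (hb : ∀ x y, (1 + dist x y) ^ β * |b x y| ≤ Nb) (x z : X) :
    Summable (fun y => a x y * b y z) ∧
      (1 + dist x z) ^ β * |∑' y, a x y * b y z| ≤ 2 ^ β * (2 * S) * Na * Nb := by
  have hNa : 0 ≤ Na := (by positivity : (0 : ℝ) ≤ _).trans (ha x x)
  have hNb : 0 ≤ Nb := (by positivity : (0 : ℝ) ≤ _).trans (hb x x)
  set w : X → X → ℝ := fun x y => (1 + dist x y) ^ (-β) with hw
  have hw_symm : (fun y => w y z) = w z := funext fun y => by simp only [hw, dist_comm]
  have hr : 0 < (1 + dist x z) ^ β := rpow_pos_of_pos (by positivity) β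
  have hterm : ∀ y, (1 + dist x z) ^ β * |a x y * b y z| ≤
      2 ^ β * Na * Nb * (w x y + w y z) := by
    intro y
    have hay : |a x y| ≤ Na * w x y := le_mul_rpow_neg_of_rpow_mul_le (by positivity) (ha x y)
    have hby : |b y z| ≤ Nb * w y z := le_mul_rpow_neg_of_rpow_mul_le (by positivity) (hb y z)
    calc (1 + dist x z) ^ β * |a x y * b y z|
        ≤ (1 + dist x z) ^ β * ((Na * w x y) * (Nb * w y z)) := by
          rw [abs_mul]; gcongr
      _ = Na * Nb * ((1 + dist x z) ^ β * (w x y * w y z)) := by ring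
      _ ≤ Na * Nb * (2 ^ β * (w x y + w y z)) := mul_le_mul_of_nonneg_left
          (one_add_dist_rpow_mul_rpow_neg_mul_rpow_neg_le hβ x y z) (by positivity)
      _ = 2 ^ β * Na * Nb * (w x y + w y z) := by ring
  have hwt : Summable fun y => w y z := hw_symm ▸ (hS z).1
  have hbound : Summable fun y => 2 ^ β * Na * Nb * (w x y + w y z) :=
    ((hS x).1.add hwt).mul_left _
  have habs : Summable fun y => |a x y * b y z| :=
    (summable_mul_left_iff hr.ne').1 (hbound.of_nonneg_of_le (fun _ => by positivity) hterm)
  refine ⟨habs.of_abs, ?_⟩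
  have hsum : ∑' y, w x y + ∑' y, w y z ≤ 2 * S := by
    rw [hw_symm]
    linarith [(hS x).2, (hS z).2]
  calc (1 + dist x z) ^ β * |∑' y, a x y * b y z|
      ≤ ∑' y, (1 + dist x z) ^ β * |a x y * b y z| := by
        rw [tsum_mul_left]
        gcongr
        have habs' : Summable fun y => ‖a x y * b y z‖ := by
          simpa only [Real.norm_eq_abs] using habs
        simpa only [Real.norm_eq_abs] using norm_tsum_le_tsum_norm habs'
    _ ≤ ∑' y, 2 ^ β * Na * Nb * (w x y + w y z) :=
        (habs.mul_left _).tsum_le_tsum hterm hbound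
    _ = 2 ^ β * Na * Nb * (∑' y, w x y + ∑' y, w y z) := by
        rw [tsum_mul_left, (hS x).1.tsum_add hwt]
    _ ≤ 2 ^ β * Na * Nb * (2 * S) := by gcongr
    _ = 2 ^ β * (2 * S) * Na * Nb := by ring

end Metric

theorem summable_and_tsum_le_of_fiber_ncard_le {α ι : Type*} {f : α → ℝ} {g : ι → ℝ}
    (c : α → ι) {D : ℕ} (hfib : ∀ i, (c ⁻¹' {i}).Finite ∧ (c ⁻¹' {i}).ncard ≤ D)
    (hf : ∀ a, 0 ≤ f a) (hg : ∀ i, 0 ≤ g i) (hfg : ∀ a, f a ≤ g (c a)) (hgs : Summable g) :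
    Summable f ∧ ∑' a, f a ≤ D * ∑' i, g i := by
  classical
  have hfin : ∀ s : Finset α, ∑ a ∈ s, f a ≤ D * ∑' i, g i := by
    intro s
    have hfiber : ∀ i, ∑ a ∈ s with c a = i, f a ≤ D * g i := by
      intro i
      have hcard : (s.filter (c · = i)).card ≤ D := by
        rw [← Set.ncard_coe_finset]
        refine (Set.ncard_le_ncard (fun a ha => ?_) (hfib i).1).trans (hfib i).2
        exact (Finset.mem_filter.1 ha).2
      calc ∑ a ∈ s with c a = i, f a ≤ (s.filter (c · = i)).card • g i :=
            Finset.sum_le_card_nsmul _ _ _ fun a ha => (Finset.mem_filter.1 ha).2 ▸ hfg a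
        _ ≤ D * g i := by rw [nsmul_eq_mul]; gcongr; exact hg i
    calc ∑ a ∈ s, f a = ∑ i ∈ s.image c, ∑ a ∈ s with c a = i, f a :=
          (Finset.sum_fiberwise_of_maps_to (fun a ha => Finset.mem_image_of_mem c ha) f).symm
      _ ≤ ∑ i ∈ s.image c, D * g i := Finset.sum_le_sum fun i _ => hfiber i
      _ ≤ D * ∑' i, g i := by
          rw [← Finset.mul_sum]; gcongr; exact hgs.sum_le_tsum _ fun i _ => hg i
  have hsum : Summable f := summable_of_sum_le hf hfin
  exact ⟨hsum, hsum.tsum_le_of_sum_le hfin⟩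

lemma summable_one_add_abs_intCast_rpow_neg {p : ℝ} (hp : 1 < p) :
    Summable fun z : ℤ => (1 + |(z : ℝ)|) ^ (-p) := by
  have hnat : Summable fun n : ℕ => (1 + (n : ℝ)) ^ (-p) := by
    refine ((summable_nat_add_iff 1).2 (summable_nat_rpow.2 (neg_lt_neg hp))).congr fun n => ?_
    push_cast; ring_nf
  exact .of_nat_of_neg (hnat.congr fun n => by simp) (hnat.congr fun n => by simp)

lemma summable_fin_pi_prod {α : Type*} {g : α → ℝ} (hg : ∀ a, 0 ≤ g a) (hgs : Summable g) :
    ∀ d : ℕ, Summable fun n : Fin d → α => ∏ i, g (n i)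
  | 0 => .of_finite
  | d + 1 => by
    refine (Fin.consEquiv fun _ => α).summable_iff.1 ?_
    refine (hgs.mul_of_nonneg (summable_fin_pi_prod hg hgs d) hg fun n =>
      Finset.prod_nonneg fun i _ => hg _).congr fun n => ?_
    simp [Fin.consEquiv, Fin.prod_univ_succ]

section Lattice

variable {d : ℕ}

def intVec (n : Fin d → ℤ) : EuclideanSpace ℝ (Fin d) := WithLp.toLp 2 fun i => (n i : ℝ)

noncomputable def ceilVec (x : EuclideanSpace ℝ (Fin d)) : Fin d → ℤ := fun i => ⌈x i⌉

@[simp]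
lemma intVec_apply (n : Fin d → ℤ) (i : Fin d) : intVec n i = n i := rfl

lemma dist_intVec (m n : Fin d → ℤ) : dist (intVec m) (intVec n) = ‖intVec (m - n)‖ := by
  rw [dist_eq_norm]
  congr 1
  ext i
  simp

lemma dist_intVec_ceilVec_le (x : EuclideanSpace ℝ (Fin d)) :
    dist x (intVec (ceilVec x)) ≤ √d := by
  rw [EuclideanSpace.dist_eq]
  gcongr
  calc ∑ i, dist (x i) (intVec (ceilVec x) i) ^ 2 ≤ ∑ _i : Fin d, (1 : ℝ) := by
        gcongr with i
        have : |x i - ⌈x i⌉| ≤ 1 :=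
          abs_le.2 ⟨by linarith [Int.ceil_lt_add_one (x i)], by linarith [Int.le_ceil (x i)]⟩
        rw [intVec_apply, ceilVec, Real.dist_eq, sq_le_one_iff_abs_le_one, abs_abs]
        exact this
    _ = d := by simp

lemma ceilVec_eq_iff {x : EuclideanSpace ℝ (Fin d)} {n : Fin d → ℤ} :
    ceilVec x = n ↔ ∀ i, x i ≤ intVec n i ∧ intVec n i < x i + 1 := by
  simp only [funext_iff, ceilVec, Int.ceil_eq_iff, intVec_apply]
  exact forall_congr' fun i => by constructor <;> intro h <;> constructor <;> linarith [h.1, h.2]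

lemma norm_intVec_apply_le (n : Fin d → ℤ) (i : Fin d) : |(n i : ℝ)| ≤ ‖intVec n‖ := by
  simpa using PiLp.norm_apply_le (intVec n) i

lemma summable_one_add_norm_intVec_rpow_neg {β : ℝ} (hβ : d < β) :
    Summable fun n : Fin d → ℤ => (1 + ‖intVec n‖) ^ (-β) := by
  rcases Nat.eq_zero_or_pos d with rfl | hd
  · exact .of_finite
  have hd : (0 : ℝ) < d := Nat.cast_pos.2 hd
  have hp : 1 < β / d := (one_lt_div hd).2 hβ
  refine (summable_fin_pi_prod (fun _ => by positivity)
    (summable_one_add_abs_intCast_rpow_neg hp) d).of_nonneg_of_le (fun _ => by positivity)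
    fun n => ?_
  calc (1 + ‖intVec n‖) ^ (-β) = ∏ _i : Fin d, (1 + ‖intVec n‖) ^ (-(β / d)) := by
        rw [Finset.prod_const, Finset.card_univ, Fintype.card_fin, ← rpow_natCast,
          ← rpow_mul (by positivity), neg_mul, div_mul_cancel₀ _ hd.ne']
    _ ≤ ∏ i, (1 + |(n i : ℝ)|) ^ (-(β / d)) := by
        refine Finset.prod_le_prod (fun _ _ => by positivity) fun i _ => ?_
        exact rpow_le_rpow_of_nonpos (by positivity)
          (by linarith [norm_intVec_apply_le n i]) (neg_nonpos.2 (by positivity))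

lemma one_add_dist_rpow_neg_le_intVec_ceilVec {β : ℝ} (hβ : 0 ≤ β)
    (x y : EuclideanSpace ℝ (Fin d)) :
    (1 + dist x y) ^ (-β) ≤ (1 + 2 * √d) ^ β * (1 + ‖intVec (ceilVec x - ceilVec y)‖) ^ (-β) := by
  rw [← dist_intVec]
  refine (one_add_dist_rpow_neg_le hβ x y (intVec (ceilVec x)) (intVec (ceilVec y))).trans ?_
  gcongr
  linarith [dist_intVec_ceilVec_le x, dist_intVec_ceilVec_le y]

end Lattice

lemma RelSep.finite_and_ncard_preimage_ceilVec_le {d D : ℕ} {Λ : Set (EuclideanSpace ℝ (Fin d))}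
    (hΛ : RelSep Λ D) (n : Fin d → ℤ) :
    ((fun lam : Λ => ceilVec (lam : EuclideanSpace ℝ (Fin d))) ⁻¹' {n}).Finite ∧
      ((fun lam : Λ => ceilVec (lam : EuclideanSpace ℝ (Fin d))) ⁻¹' {n}).ncard ≤ D := by
  have hfiber : (fun lam : Λ => ceilVec (lam : EuclideanSpace ℝ (Fin d))) ⁻¹' {n} =
      {lam : Λ | ∀ i, (lam : EuclideanSpace ℝ (Fin d)) i ≤ intVec n i ∧
        intVec n i < (lam : EuclideanSpace ℝ (Fin d)) i + 1} :=
    Set.ext fun _ => ceilVec_eq_iff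
  rw [hfiber]
  exact hΛ (intVec n)

theorem RelSep.exists_forall_tsum_one_add_dist_rpow_neg_le {d D : ℕ} {β : ℝ} (hβ : d < β)
    {Λ : Set (EuclideanSpace ℝ (Fin d))} (hΛ : RelSep Λ D) :
    ∃ S > 0, ∀ μ : EuclideanSpace ℝ (Fin d),
      Summable (fun lam : Λ => (1 + dist μ lam) ^ (-β)) ∧
        ∑' lam : Λ, (1 + dist μ lam) ^ (-β) ≤ S := by
  have hβ0 : 0 ≤ β := (Nat.cast_nonneg d).trans hβ.le
  set K := (1 + 2 * √d) ^ β
  set S₀ := ∑' n : Fin d → ℤ, (1 + ‖intVec n‖) ^ (-β)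
  have hS₀ : 0 ≤ S₀ := tsum_nonneg fun _ => by positivity
  refine ⟨D * (K * S₀) + 1, by positivity, fun μ => ?_⟩
  let g : (Fin d → ℤ) → ℝ := fun n => K * (1 + ‖intVec (ceilVec μ - n)‖) ^ (-β)
  have hg : Summable g := ((Equiv.subLeft (ceilVec μ)).summable_iff.2
    (summable_one_add_norm_intVec_rpow_neg hβ)).mul_left K
  have hgS : ∑' n, g n = K * S₀ := by
    rw [tsum_mul_left]
    exact congrArg (K * ·)
      ((Equiv.subLeft (ceilVec μ)).tsum_eq fun n => (1 + ‖intVec n‖) ^ (-β))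
  obtain ⟨hsum, hle⟩ := summable_and_tsum_le_of_fiber_ncard_le _
    hΛ.finite_and_ncard_preimage_ceilVec_le (fun _ => by positivity) (fun _ => by positivity)
    (fun lam => one_add_dist_rpow_neg_le_intVec_ceilVec hβ0 μ lam) hg
  exact ⟨hsum, by rw [hgS] at hle; linarith⟩

/-- For `β > d` and a relatively-separated `Λ ⊆ ℝ^d`, the Jaffard class
`𝒥_β(Λ)` is closed under matrix multiplication, with a submultiplicative norm bound
`‖AB‖_{𝒥_β} ≤ C ‖A‖_{𝒥_β} ‖B‖_{𝒥_β}` for a constant `C` depending only on `β, d`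
and the separation constant. -/
theorem stmt_5 {d : ℕ} (β : ℝ) (hβ : (d : ℝ) < β)
    (Λ : Set (EuclideanSpace ℝ (Fin d))) (D : ℕ) (hΛ : RelSep Λ D) :
    ∃ C > (0 : ℝ), ∀ (a b : Λ → Λ → ℝ) (Na Nb : ℝ),
      (∀ lam lam' : Λ, (1 + dist (lam : EuclideanSpace ℝ (Fin d)) (lam' : EuclideanSpace ℝ (Fin d))) ^ β * |a lam lam'| ≤ Na) →
      (∀ lam lam' : Λ, (1 + dist (lam : EuclideanSpace ℝ (Fin d)) (lam' : EuclideanSpace ℝ (Fin d))) ^ β * |b lam lam'| ≤ Nb) →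
      ∀ lam lam'' : Λ,
        Summable (fun lam' : Λ => a lam lam' * b lam' lam'') ∧
        (1 + dist (lam : EuclideanSpace ℝ (Fin d)) (lam'' : EuclideanSpace ℝ (Fin d))) ^ β *
            |∑' lam' : Λ, a lam lam' * b lam' lam''| ≤ C * Na * Nb := by
  obtain ⟨S, hS, hΛS⟩ := hΛ.exists_forall_tsum_one_add_dist_rpow_neg_le hβ
  exact ⟨2 ^ β * (2 * S), by positivity, fun a b Na Nb ha hb =>
    summable_mul_and_one_add_dist_rpow_mul_abs_tsum_le (X := Λ)
      ((Nat.cast_nonneg d).trans hβ.le) (fun μ => hΛS μ) ha hb⟩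
end

section
/- Let 𝒜 be a Banach subalgebra of ℬ(ℓ²) that admits norm control in ℬ(ℓ²) (i.e., there is a continuous h : [0,∞)² → [0,∞) with ‖A⁻¹‖_𝒜 ≤ h(‖A‖_𝒜, ‖A⁻¹‖_{ℬ(ℓ²)}) whenever A ∈ 𝒜 and A⁻¹ ∈ ℬ(ℓ²)). If f : ℓ² → ℓ² is strictly monotonic with continuous bounded gradient ∇f taking values in 𝒜, then f is invertible and the inverse f⁻¹ has continuous bounded gradient in 𝒜, with ∇(f⁻¹)(y) = (∇f(f⁻¹(y)))⁻¹. -/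
/-!
Strong monotonicity makes `f` antilipschitz with constant `m₀⁻¹`, and together with the Lipschitz
bound coming from the bounded derivative it makes `f` surjective (Zarantonello's contraction
argument). Differentiating the monotonicity inequality shows that every `∇f(x)` is coercive, hence
invertible in `ℬ(H)` by Lax–Milgram with `‖∇f(x)⁻¹‖ ≤ m₀⁻¹`, and the inverse function rule gives
`∇(f⁻¹)(y) = ∇f(f⁻¹ y)⁻¹`. Norm control puts this inverse into `𝒜` as the ring inverse of
`∇f(f⁻¹ y)`, with norm at most `h` evaluated on the compact box `[0, M] × [0, m₀⁻¹]`; continuity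
follows from continuity of inversion on the units of the Banach algebra `𝒜`.
-/

open Function Filter Topology
open scoped InnerProductSpace NNReal

section InnerProduct

variable {E : Type*} [NormedAddCommGroup E] [InnerProductSpace ℝ E]

def StronglyMonotone (m : ℝ) (f : E → E) : Prop :=
  ∀ x x', m * ‖x - x'‖ ^ 2 ≤ ⟪x - x', f x - f x'⟫_ℝ

lemma mul_norm_le_norm_of_mul_sq_le_inner {m : ℝ} {u v : E} (h : m * ‖u‖ ^ 2 ≤ ⟪u, v⟫_ℝ) :
    m * ‖u‖ ≤ ‖v‖ := by
  rcases eq_or_ne u 0 with rfl | hu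
  · simp
  · have hu' : 0 < ‖u‖ := norm_pos_iff.mpr hu
    have : m * ‖u‖ * ‖u‖ ≤ ‖v‖ * ‖u‖ := by nlinarith [real_inner_le_norm u v]
    exact le_of_mul_le_mul_right this hu'

namespace StronglyMonotone

variable {m : ℝ} {f : E → E}

lemma antilipschitz (hf : StronglyMonotone m f) (hm : 0 < m) :
    AntilipschitzWith m.toNNReal⁻¹ f :=
  AntilipschitzWith.of_le_mul_dist fun x x' => by
    rw [dist_eq_norm, dist_eq_norm, NNReal.coe_inv, Real.coe_toNNReal _ hm.le, inv_mul_eq_div,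
      le_div_iff₀ hm, mul_comm]
    exact mul_norm_le_norm_of_mul_sq_le_inner (hf x x')

/-- For `t = m / L²` with `L` a positive Lipschitz constant of `f`, the map `x ↦ x - t • (f x - y)`
is a contraction with ratio `√(1 - m² / L²)`, and its fixed point solves `f x = y`. -/
lemma surjective [CompleteSpace E] (hf : StronglyMonotone m f) (hm : 0 < m) {K : ℝ≥0}
    (hK : LipschitzWith K f) : Surjective f := by
  intro y
  set L : ℝ := K + 1
  have hL : 0 < L := by positivity
  set t := m / L ^ 2
  have ht : 0 < t := by positivity
  set Φ : E → E := fun x => x - t • (f x - y)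
  set c := √(1 - m ^ 2 / L ^ 2)
  have hΦ : ∀ x x', ‖Φ x - Φ x'‖ ≤ c * ‖x - x'‖ := by
    intro x x'
    have hsub : Φ x - Φ x' = (x - x') - t • (f x - f x') := by simp only [Φ, smul_sub]; abel
    have hLip : ‖f x - f x'‖ ≤ L * ‖x - x'‖ := by
      have := hK.dist_le_mul x x'
      rw [dist_eq_norm, dist_eq_norm] at this
      exact this.trans (by gcongr; simp [L])
    have hsq : ‖Φ x - Φ x'‖ ^ 2 ≤ (1 - m ^ 2 / L ^ 2) * ‖x - x'‖ ^ 2 := by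
      rw [hsub, norm_sub_sq_real, real_inner_smul_right, norm_smul, Real.norm_eq_abs,
        abs_of_pos ht]
      have hinner := mul_le_mul_of_nonneg_left (hf x x') ht.le
      have hnorm := mul_le_mul_of_nonneg_left hLip ht.le
      calc ‖x - x'‖ ^ 2 - 2 * (t * ⟪x - x', f x - f x'⟫_ℝ) + (t * ‖f x - f x'‖) ^ 2
          ≤ ‖x - x'‖ ^ 2 - 2 * (t * (m * ‖x - x'‖ ^ 2)) + (t * (L * ‖x - x'‖)) ^ 2 := by
            gcongr
        _ = (1 - m ^ 2 / L ^ 2) * ‖x - x'‖ ^ 2 := by simp only [t]; field_simp; ring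
    calc ‖Φ x - Φ x'‖ = √(‖Φ x - Φ x'‖ ^ 2) := (Real.sqrt_sq (norm_nonneg _)).symm
      _ ≤ √((1 - m ^ 2 / L ^ 2) * ‖x - x'‖ ^ 2) := Real.sqrt_le_sqrt hsq
      _ = c * ‖x - x'‖ := by rw [Real.sqrt_mul' _ (sq_nonneg _), Real.sqrt_sq (norm_nonneg _)]
  have hc : c < 1 := by
    rw [Real.sqrt_lt' one_pos]
    have : 0 < m ^ 2 / L ^ 2 := by positivity
    linarith
  have hΦc : ContractingWith c.toNNReal Φ :=
    ⟨Real.toNNReal_lt_one.mpr hc, LipschitzWith.of_dist_le_mul fun x x' => by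
      rw [dist_eq_norm, dist_eq_norm, Real.coe_toNNReal _ (Real.sqrt_nonneg _)]
      exact hΦ x x'⟩
  refine ⟨ContractingWith.fixedPoint Φ hΦc, ?_⟩
  have hfix : Φ _ = _ := hΦc.fixedPoint_isFixedPt
  rw [sub_eq_self, smul_eq_zero, sub_eq_zero] at hfix
  exact hfix.resolve_left ht.ne'

lemma inner_apply_hasFDerivAt (hf : StronglyMonotone m f) {D : E →L[ℝ] E} {x : E}
    (hD : HasFDerivAt f D x) (u : E) : m * ‖u‖ ^ 2 ≤ ⟪u, D u⟫_ℝ := by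
  have hlim := hD.lim u (c := id) (l := atTop) tendsto_norm_atTop_atTop
  refine ge_of_tendsto (tendsto_const_nhds.inner hlim) ?_
  filter_upwards [eventually_gt_atTop 0] with s hs
  have h := hf (x + s⁻¹ • u) x
  rw [add_sub_cancel_left, norm_smul, real_inner_smul_left, Real.norm_eq_abs,
    abs_of_pos (inv_pos.mpr hs)] at h
  rw [id, real_inner_smul_right]
  calc m * ‖u‖ ^ 2 = s ^ 2 * (m * (s⁻¹ * ‖u‖) ^ 2) := by field_simp
    _ ≤ s ^ 2 * (s⁻¹ * ⟪u, f (x + s⁻¹ • u) - f x⟫_ℝ) := by gcongr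
    _ = s * ⟪u, f (x + s⁻¹ • u) - f x⟫_ℝ := by field_simp

end StronglyMonotone

lemma ContinuousLinearMap.exists_continuousLinearEquiv_of_coercive [CompleteSpace E] {m : ℝ}
    {D : E →L[ℝ] E} (hm : 0 < m) (hD : ∀ u, m * ‖u‖ ^ 2 ≤ ⟪u, D u⟫_ℝ) :
    ∃ T : E ≃L[ℝ] E, (T : E →L[ℝ] E) = D ∧ ‖(T.symm : E →L[ℝ] E)‖ ≤ m⁻¹ := by
  have hB : IsCoercive ((innerSL ℝ).comp D) := ⟨m, hm, fun u => by
    rw [comp_apply, innerSL_apply_apply, real_inner_comm, mul_assoc, ← sq]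
    exact hD u⟩
  set T := hB.continuousLinearEquivOfBilin
  have hT : (T : E →L[ℝ] E) = D := by
    ext u
    exact ext_inner_right ℝ fun w => hB.continuousLinearEquivOfBilin_apply u w
  refine ⟨T, hT, opNorm_le_bound _ (by positivity) fun v => ?_⟩
  have h := mul_norm_le_norm_of_mul_sq_le_inner (hD (T.symm v))
  rw [← hT, ContinuousLinearEquiv.coe_coe, ContinuousLinearEquiv.apply_symm_apply] at h
  rw [ContinuousLinearEquiv.coe_coe, inv_mul_eq_div, le_div_iff₀ hm, mul_comm]
  exact h

end InnerProduct

lemma AntilipschitzWith.hasFDerivAt_invFun {𝕜 E F : Type*} [NontriviallyNormedField 𝕜]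
    [NormedAddCommGroup E] [NormedSpace 𝕜 E] [NormedAddCommGroup F] [NormedSpace 𝕜 F]
    {f : E → F} {K : ℝ≥0} (hf : AntilipschitzWith K f) (hsurj : Surjective f)
    {T : E → E ≃L[𝕜] F} (hT : ∀ x, HasFDerivAt f (T x : E →L[𝕜] F) x) (y : F) :
    HasFDerivAt (invFun f) ((T (invFun f y)).symm : F →L[𝕜] E) y :=
  (hT _).of_local_left_inverse
    (hf.to_rightInverse (rightInverse_invFun hsurj)).continuous.continuousAt
    (.of_forall (rightInverse_invFun hsurj))

lemma Function.Injective.ringInverse_eq_of_map_eq {F R S : Type*} [MonoidWithZero R] [Monoid S]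
    [FunLike F R S] [MonoidHomClass F R S] {φ : F} (hφ : Injective φ) {a b : R} {u : Sˣ}
    (ha : φ a = u) (hb : φ b = ↑u⁻¹) : IsUnit a ∧ Ring.inverse a = b :=
  let v : Rˣ := ⟨a, b, hφ (by rw [map_mul, ha, hb, Units.mul_inv, map_one]),
    hφ (by rw [map_mul, ha, hb, Units.inv_mul, map_one])⟩
  ⟨v.isUnit, Ring.inverse_unit v⟩

section NormControl

variable {H 𝒜 : Type*} [NormedAddCommGroup H] [NormedSpace ℝ H] [NormedRing 𝒜] [Algebra ℝ 𝒜]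

def HasNormControl (ι : 𝒜 →ₐ[ℝ] (H →L[ℝ] H)) (h : ℝ → ℝ → ℝ) : Prop :=
  ∀ (a : 𝒜) (T : H ≃L[ℝ] H), ι a = T →
    ∃ b : 𝒜, ι b = T.symm ∧ ‖b‖ ≤ h ‖a‖ ‖(T.symm : H →L[ℝ] H)‖

lemma HasNormControl.ringInverse {ι : 𝒜 →ₐ[ℝ] (H →L[ℝ] H)} {h : ℝ → ℝ → ℝ}
    (hnc : HasNormControl ι h) (hι : Injective ι) {a : 𝒜} {T : H ≃L[ℝ] H} (ha : ι a = T) :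
    IsUnit a ∧ ι (Ring.inverse a) = T.symm ∧
      ‖Ring.inverse a‖ ≤ h ‖a‖ ‖(T.symm : H →L[ℝ] H)‖ := by
  obtain ⟨b, hb, hbn⟩ := hnc a T ha
  obtain ⟨hu, rfl⟩ := hι.ringInverse_eq_of_map_eq (u := T.toUnit) ha hb
  exact ⟨hu, hb, hbn⟩

end NormControl

/-- Nonlinear Wiener's lemma: Let `𝒜` be a Banach subalgebra of `ℬ(ℓ²)`
(embedded via `ι`) admitting norm control. If `f : ℓ² → ℓ²` is strictly monotonic with
continuous bounded gradient taking values in `𝒜`, then `f` is invertible and `f⁻¹` has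
continuous bounded gradient in `𝒜`, with `∇(f⁻¹)(y) = (∇f(f⁻¹ y))⁻¹`. -/
theorem stmt_7 {H : Type*} [NormedAddCommGroup H] [InnerProductSpace ℝ H] [CompleteSpace H]
    {𝒜 : Type*} [NormedRing 𝒜] [NormedAlgebra ℝ 𝒜] [CompleteSpace 𝒜]
    (ι : 𝒜 →ₐ[ℝ] (H →L[ℝ] H)) (hinj : Function.Injective ι)
    (Cemb : ℝ) (hemb : ∀ a : 𝒜, ‖ι a‖ ≤ Cemb * ‖a‖)
    -- norm control: inverses in ℬ(ℓ²) of elements of 𝒜 lie in 𝒜 with controlled norm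
    (hfun : ℝ → ℝ → ℝ) (hfun_cont : Continuous fun p : ℝ × ℝ => hfun p.1 p.2)
    (hnc : ∀ (a : 𝒜) (T : H ≃L[ℝ] H), ι a = (T : H →L[ℝ] H) →
      ∃ b : 𝒜, ι b = (T.symm : H →L[ℝ] H) ∧ ‖b‖ ≤ hfun ‖a‖ ‖(T.symm : H →L[ℝ] H)‖)
    (f : H → H) (m₀ : ℝ) (hm₀ : 0 < m₀)
    (hmono : ∀ x x' : H, m₀ * ‖x - x'‖ ^ 2 ≤ (inner ℝ (x - x') (f x - f x') : ℝ))
    (f' : H → 𝒜) (hdiff : ∀ x, HasFDerivAt f (ι (f' x)) x)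
    (M : ℝ) (hbdd : ∀ x, ‖f' x‖ ≤ M)
    (hcont : Continuous f') :
    Function.Bijective f ∧
      ∃ g : H → 𝒜,
        (∀ y, HasFDerivAt (Function.invFun f) (ι (g y)) y) ∧
        (∀ y, (ι (f' (Function.invFun f y))).comp (ι (g y)) = ContinuousLinearMap.id ℝ H ∧
              (ι (g y)).comp (ι (f' (Function.invFun f y))) = ContinuousLinearMap.id ℝ H) ∧
        (∃ M' : ℝ, ∀ y, ‖g y‖ ≤ M') ∧
        Continuous g := by
  have hderiv_le : ∀ x, ‖ι (f' x)‖₊ ≤ (|Cemb| * M).toNNReal := fun x => by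
    rw [← norm_toNNReal]
    exact Real.toNNReal_mono ((hemb _).trans (by gcongr; exacts [le_abs_self _, hbdd x]))
  have hlip : LipschitzWith (|Cemb| * M).toNNReal f := by
    rw [← lipschitzOnWith_univ]
    exact convex_univ.lipschitzOnWith_of_nnnorm_hasFDerivWithin_le
      (fun x _ => (hdiff x).hasFDerivWithinAt) fun x _ => hderiv_le x
  have hmono' : StronglyMonotone m₀ f := hmono
  have hsurj := hmono'.surjective hm₀ hlip
  have hanti := hmono'.antilipschitz hm₀
  choose T hT hT_symm using fun x => ContinuousLinearMap.exists_continuousLinearEquiv_of_coercive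
    hm₀ (hmono'.inner_apply_hasFDerivAt (hdiff x))
  choose hunit hinv hinv_le using fun x => HasNormControl.ringInverse hnc hinj (hT x).symm
  obtain ⟨C, hC⟩ := ((isCompact_Icc (a := 0) (b := M)).prod
    (isCompact_Icc (a := 0) (b := m₀⁻¹))).bddAbove_image hfun_cont.continuousOn
  refine ⟨⟨hanti.injective, hsurj⟩, fun y => Ring.inverse (f' (invFun f y)), fun y => ?_,
    fun y => ?_, ⟨C, fun y => ?_⟩, ?_⟩
  · rw [hinv]
    exact hanti.hasFDerivAt_invFun hsurj (fun x => (hT x).symm ▸ hdiff x) y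
  · rw [hinv, ← hT]
    exact ⟨(T _).coe_comp_coe_symm, (T _).coe_symm_comp_coe⟩
  · exact (hinv_le _).trans
      (hC ⟨(_, _), ⟨⟨norm_nonneg _, hbdd _⟩, ⟨norm_nonneg _, hT_symm _⟩⟩, rfl⟩)
  · have hinvFun := hanti.to_rightInverse (rightInverse_invFun hsurj)
    refine continuous_iff_continuousAt.2 fun y => ContinuousAt.comp (g := Ring.inverse) ?_
      (hcont.comp hinvFun.continuous).continuousAt
    exact (hunit _).unit_spec ▸ NormedRing.inverse_continuousAt (hunit _).unit
end

section
/- Let F : ℝ → ℝ be differentiable with F(0) = 0 whose derivative satisfies 0 < m ≤ F'(t) ≤ M < ∞ for all t. Let Φ = (φ_λ) generate a Riesz basis of a closed subspace V ⊆ L², i.e., A‖c‖₂ ≤ ‖Σ_λ c(λ)φ_λ‖_{L²} ≤ B‖c‖₂. Then the map S : c ↦ (⟨F(cᵀΦ), φ_λ⟩)_λ satisfies m A²‖c₁ − c₂‖₂² ≤ ⟨c₁ − c₂, S(c₁) − S(c₂)⟩ ≤ M B²‖c₁ − c₂‖₂² for all c₁, c₂ ∈ ℓ². -/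
/-!
The inner product `⟨c₁ - c₂, S c₁ - S c₂⟩` is `⟪G₁ - G₂, T c₁ - T c₂⟫ = ∫ (F u₁ - F u₂)(u₁ - u₂)`
with `uᵢ = T cᵢ`, by continuity of the inner product applied to the synthesis series. By the
mean value theorem the integrand lies between `m (u₁ - u₂)²` and `M (u₁ - u₂)²`, so the inner
product lies between `m ‖T (c₁ - c₂)‖²` and `M ‖T (c₁ - c₂)‖²`, and the Riesz bounds finish.
-/

open MeasureTheory

section MeanValue

variable {f : ℝ → ℝ} {C : ℝ}

theorem mul_sq_le_sub_mul_sub_of_le_deriv (hf : Differentiable ℝ f)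
    (hC : ∀ x, C ≤ deriv f x) (a b : ℝ) :
    C * (a - b) ^ 2 ≤ (f a - f b) * (a - b) := by
  rcases le_total b a with hba | hab
  · have := mul_sub_le_image_sub_of_le_deriv hf hC hba
    nlinarith
  · have := mul_sub_le_image_sub_of_le_deriv hf hC hab
    nlinarith

theorem sub_mul_sub_le_mul_sq_of_deriv_le (hf : Differentiable ℝ f)
    (hC : ∀ x, deriv f x ≤ C) (a b : ℝ) :
    (f a - f b) * (a - b) ≤ C * (a - b) ^ 2 := by
  rcases le_total b a with hba | hab
  · have := image_sub_le_mul_sub_of_deriv_le hf hC hba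
    nlinarith
  · have := image_sub_le_mul_sub_of_deriv_le hf hC hab
    nlinarith

end MeanValue

namespace MeasureTheory.L2

variable {α : Type*} [MeasurableSpace α] {μ : Measure α}

theorem real_inner_eq_integral (f g : Lp ℝ 2 μ) : inner ℝ f g = ∫ a, f a * g a ∂μ := by
  simp [inner_def, mul_comm]

theorem integrable_mul (f g : Lp ℝ 2 μ) : Integrable (fun a => f a * g a) μ := by
  simpa [mul_comm] using integrable_inner (𝕜 := ℝ) f g

theorem mul_norm_sq_le_real_inner_of_ae {C : ℝ} {g h : Lp ℝ 2 μ}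
    (hle : ∀ᵐ a ∂μ, C * h a ^ 2 ≤ g a * h a) : C * ‖h‖ ^ 2 ≤ inner ℝ g h := by
  rw [← real_inner_self_eq_norm_sq, real_inner_eq_integral, real_inner_eq_integral,
    ← integral_const_mul]
  exact integral_mono_ae ((integrable_mul h h).const_mul C) (integrable_mul g h)
    (hle.mono fun a ha => by rwa [sq] at ha)

theorem real_inner_le_mul_norm_sq_of_ae {C : ℝ} {g h : Lp ℝ 2 μ}
    (hle : ∀ᵐ a ∂μ, g a * h a ≤ C * h a ^ 2) : inner ℝ g h ≤ C * ‖h‖ ^ 2 := by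
  rw [← real_inner_self_eq_norm_sq, real_inner_eq_integral, real_inner_eq_integral,
    ← integral_const_mul]
  exact integral_mono_ae (integrable_mul g h) ((integrable_mul h h).const_mul C)
    (hle.mono fun a ha => by rwa [sq] at ha)

end MeasureTheory.L2

section Synthesis

variable {ι E : Type*} [NormedAddCommGroup E] [InnerProductSpace ℝ E]

theorem HasSum.tsum_mul_inner {c : ι → ℝ} {φ : ι → E} {x : E}
    (hx : HasSum (fun i => c i • φ i) x) (y : E) :
    ∑' i, c i * inner ℝ y (φ i) = inner ℝ y x := by
  simpa [real_inner_smul_right] using ((innerSL ℝ y).hasSum hx).tsum_eq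

theorem map_sub_of_hasSum_smul {φ : ι → E} {T : lp (fun _ : ι => ℝ) 2 → E}
    (hT : ∀ c : lp (fun _ : ι => ℝ) 2, HasSum (fun i => c i • φ i) (T c))
    (c₁ c₂ : lp (fun _ : ι => ℝ) 2) : T (c₁ - c₂) = T c₁ - T c₂ :=
  (hT (c₁ - c₂)).unique <| by
    simpa [sub_smul] using (hT c₁).sub (hT c₂)

end Synthesis

theorem stmt_14_general {α : Type*} [MeasurableSpace α] (μ : Measure α) (Λ : Type*)
    (F F' : ℝ → ℝ) (hdiff : ∀ t, HasDerivAt F (F' t) t)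
    (m M : ℝ) (hm : 0 < m) (hbounds : ∀ t, m ≤ F' t ∧ F' t ≤ M)
    (Φ : Λ → Lp ℝ 2 μ)
    (A B : ℝ) (hA : 0 < A)
    (T : lp (fun _ : Λ => ℝ) 2 → Lp ℝ 2 μ)
    (hT : ∀ c : lp (fun _ : Λ => ℝ) 2, HasSum (fun lam : Λ => c lam • Φ lam) (T c))
    (hRiesz : ∀ c : lp (fun _ : Λ => ℝ) 2, A * ‖c‖ ≤ ‖T c‖ ∧ ‖T c‖ ≤ B * ‖c‖)
    (c₁ c₂ : lp (fun _ : Λ => ℝ) 2) (G₁ G₂ : Lp ℝ 2 μ)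
    (hG₁ : (G₁ : α → ℝ) =ᵐ[μ] fun t => F ((T c₁ : α → ℝ) t))
    (hG₂ : (G₂ : α → ℝ) =ᵐ[μ] fun t => F ((T c₂ : α → ℝ) t)) :
    m * A ^ 2 * ‖c₁ - c₂‖ ^ 2 ≤
        (∑' lam : Λ, (c₁ lam - c₂ lam) *
          ((inner ℝ G₁ (Φ lam) : ℝ) - (inner ℝ G₂ (Φ lam) : ℝ))) ∧
      (∑' lam : Λ, (c₁ lam - c₂ lam) *
          ((inner ℝ G₁ (Φ lam) : ℝ) - (inner ℝ G₂ (Φ lam) : ℝ))) ≤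
        M * B ^ 2 * ‖c₁ - c₂‖ ^ 2 := by
  have hF : Differentiable ℝ F := fun t => (hdiff t).differentiableAt
  have hderiv : ∀ t, deriv F t = F' t := fun t => (hdiff t).deriv
  set d := c₁ - c₂
  have hsum : ∑' lam, (c₁ lam - c₂ lam) * (inner ℝ G₁ (Φ lam) - inner ℝ G₂ (Φ lam))
      = inner ℝ (G₁ - G₂) (T d) := by
    simp only [← (hT d).tsum_mul_inner, inner_sub_left, d, lp.coeFn_sub, Pi.sub_apply]
  have hintegrand : ∀ᵐ a ∂μ, (G₁ - G₂ : Lp ℝ 2 μ) a * T d a =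
      (F (T c₁ a) - F (T c₂ a)) * (T c₁ a - T c₂ a) ∧ T d a = T c₁ a - T c₂ a := by
    filter_upwards [Lp.coeFn_sub G₁ G₂, Lp.coeFn_sub (T c₁) (T c₂), hG₁, hG₂]
      with a hG hTd hG₁a hG₂a
    rw [map_sub_of_hasSum_smul hT, hG, hTd, Pi.sub_apply, Pi.sub_apply, hG₁a, hG₂a]
    exact ⟨rfl, rfl⟩
  have hlower : m * ‖T d‖ ^ 2 ≤ inner ℝ (G₁ - G₂) (T d) :=
    L2.mul_norm_sq_le_real_inner_of_ae <| hintegrand.mono fun a ⟨hGa, hTa⟩ => by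
      rw [hGa, hTa]
      exact mul_sq_le_sub_mul_sub_of_le_deriv hF (fun t => hderiv t ▸ (hbounds t).1) _ _
  have hupper : inner ℝ (G₁ - G₂) (T d) ≤ M * ‖T d‖ ^ 2 :=
    L2.real_inner_le_mul_norm_sq_of_ae <| hintegrand.mono fun a ⟨hGa, hTa⟩ => by
      rw [hGa, hTa]
      exact sub_mul_sub_le_mul_sq_of_deriv_le hF (fun t => hderiv t ▸ (hbounds t).2) _ _
  have hM : 0 ≤ M := hm.le.trans ((hbounds 0).1.trans (hbounds 0).2)
  obtain ⟨hRA, hRB⟩ := hRiesz d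
  rw [hsum]
  constructor
  · calc m * A ^ 2 * ‖d‖ ^ 2 = m * (A * ‖d‖) ^ 2 := by ring
      _ ≤ m * ‖T d‖ ^ 2 := by gcongr
      _ ≤ _ := hlower
  · calc _ ≤ M * ‖T d‖ ^ 2 := hupper
      _ ≤ M * (B * ‖d‖) ^ 2 := by gcongr
      _ = M * B ^ 2 * ‖d‖ ^ 2 := by ring

/-- Let `F : ℝ → ℝ` be differentiable with `F 0 = 0` and
`0 < m ≤ F' ≤ M`, and let `Φ = (φ_λ)` generate a Riesz basis with bounds `A ≤ B`
(synthesis map `T c = Σ_λ c λ • φ_λ`). Then the sampling map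
`S : c ↦ (⟨F(cᵀΦ), φ_λ⟩)_λ` satisfies
`m A² ‖c₁−c₂‖² ≤ ⟨c₁−c₂, S c₁ − S c₂⟩ ≤ M B² ‖c₁−c₂‖²`. -/
theorem stmt_14 {α : Type*} [MeasurableSpace α] (μ : Measure α) (Λ : Type*)
    (F F' : ℝ → ℝ) (hdiff : ∀ t, HasDerivAt F (F' t) t) (hF0 : F 0 = 0)
    (m M : ℝ) (hm : 0 < m) (hbounds : ∀ t, m ≤ F' t ∧ F' t ≤ M)
    (Φ : Λ → Lp ℝ 2 μ)
    (A B : ℝ) (hA : 0 < A) (hAB : A ≤ B)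
    (T : lp (fun _ : Λ => ℝ) 2 → Lp ℝ 2 μ)
    (hT : ∀ c : lp (fun _ : Λ => ℝ) 2, HasSum (fun lam : Λ => c lam • Φ lam) (T c))
    (hRiesz : ∀ c : lp (fun _ : Λ => ℝ) 2, A * ‖c‖ ≤ ‖T c‖ ∧ ‖T c‖ ≤ B * ‖c‖)
    (c₁ c₂ : lp (fun _ : Λ => ℝ) 2) (G₁ G₂ : Lp ℝ 2 μ)
    (hG₁ : (G₁ : α → ℝ) =ᵐ[μ] fun t => F ((T c₁ : α → ℝ) t))
    (hG₂ : (G₂ : α → ℝ) =ᵐ[μ] fun t => F ((T c₂ : α → ℝ) t)) :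
    m * A ^ 2 * ‖c₁ - c₂‖ ^ 2 ≤
        (∑' lam : Λ, (c₁ lam - c₂ lam) *
          ((inner ℝ G₁ (Φ lam) : ℝ) - (inner ℝ G₂ (Φ lam) : ℝ))) ∧
      (∑' lam : Λ, (c₁ lam - c₂ lam) *
          ((inner ℝ G₁ (Φ lam) : ℝ) - (inner ℝ G₂ (Φ lam) : ℝ))) ≤
        M * B ^ 2 * ‖c₁ - c₂‖ ^ 2 :=
  stmt_14_general μ Λ F F' hdiff m M hm hbounds Φ A B hA T hT hRiesz c₁ c₂ G₁ G₂ hG₁ hG₂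
end
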